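/- With a₀ < ⋯ < a_m and f : ℝ → ℝ subharmonic (on all of ℝ), the piecewise harmonic interpolation I(f) at nodes a₀,…,a_m satisfies I(f) ≤ f on (−∞, a₀) and on (a_m, +∞), where I(f) is extended outside [a₀,a_m] by the harmonic functions f₀ and f_{m−1} respectively. -/

import Mathlib

/-!
Harmonic functions are `t ↦ A + B φ(t)` where `φ' = e^{-2βt}`, so a harmonic function is either
antitone or strictly monotone (and either monotone or strictly antitone). For `x < a₀`, let `h` be
the harmonic function through `(x, f x)` and `(a₁, f a₁)`. Subharmonicity gives `f a₀ ≤ h a₀`, so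
the harmonic difference `h - f₀` vanishes at `a₁` and is nonnegative at `a₀`; it is therefore
antitone, whence `f x - f₀ x = (h - f₀) x ≥ (h - f₀) a₀ ≥ 0`. The right end is symmetric.
-/

/-- `f` is harmonic for `L f = β f' + (1/2) f''`. -/
def Harmonic (β : ℝ) (f : ℝ → ℝ) : Prop :=
  Differentiable ℝ f ∧ Differentiable ℝ (deriv f) ∧
    ∀ x, β * deriv f x + (1 / 2) * deriv (deriv f) x = 0

/-- `f` is subharmonic on `s` (comparison/maximum principle form). -/
def SubharmonicOn (β : ℝ) (f : ℝ → ℝ) (s : Set ℝ) : Prop :=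
  ∀ u v : ℝ, u < v → Set.Icc u v ⊆ s →
    ∀ h : ℝ → ℝ, Harmonic β h → f u ≤ h u → f v ≤ h v →
      ∀ x ∈ Set.Icc u v, f x ≤ h x

open Set

namespace Harmonic

variable {β : ℝ} {d g : ℝ → ℝ}

theorem sub (hd : Harmonic β d) (hg : Harmonic β g) : Harmonic β (fun t => d t - g t) := by
  obtain ⟨hd₁, hd₂, hd₃⟩ := hd
  obtain ⟨hg₁, hg₂, hg₃⟩ := hg
  have hderiv : deriv (fun t => d t - g t) = fun t => deriv d t - deriv g t := by
    funext t; exact deriv_sub (hd₁ t) (hg₁ t)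
  refine ⟨hd₁.sub hg₁, hderiv ▸ hd₂.sub hg₂, fun x => ?_⟩
  rw [hderiv, deriv_fun_sub (hd₂ x) (hg₂ x)]
  linear_combination hd₃ x - hg₃ x

theorem const_add_const_mul (hd : Harmonic β d) (A B : ℝ) :
    Harmonic β (fun t => A + B * d t) := by
  obtain ⟨hd₁, hd₂, hd₃⟩ := hd
  have hderiv : deriv (fun t => A + B * d t) = fun t => B * deriv d t := by
    funext t; simp [deriv_const_mul _ (hd₁ t)]
  refine ⟨(hd₁.const_mul B).const_add A, hderiv ▸ hd₂.const_mul B, fun x => ?_⟩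
  rw [hderiv, deriv_const_mul _ (hd₂ x)]
  linear_combination B * hd₃ x

theorem deriv_eq (hd : Harmonic β d) (x : ℝ) :
    deriv d x = deriv d 0 * Real.exp (-(2 * β) * x) := by
  obtain ⟨-, hd₂, hd₃⟩ := hd
  have hconst : ∀ y, HasDerivAt (fun t => deriv d t * Real.exp (2 * β * t)) 0 y := by
    intro y
    refine ((hd₂ y).hasDerivAt.mul ((hasDerivAt_id y).const_mul (2 * β)).exp).congr_deriv ?_
    simp only [id, mul_one]
    linear_combination 2 * Real.exp (2 * β * y) * hd₃ y
  have key := is_const_of_deriv_eq_zero (fun y => (hconst y).differentiableAt)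
    (fun y => (hconst y).deriv) x 0
  simp only [mul_zero, Real.exp_zero, mul_one] at key
  rw [← key, mul_assoc, ← Real.exp_add]
  simp

theorem antitone_or_strictMono (hd : Harmonic β d) : Antitone d ∨ StrictMono d := by
  rcases le_or_gt (deriv d 0) 0 with h | h
  · refine .inl (antitone_of_deriv_nonpos hd.1 fun x => ?_)
    rw [hd.deriv_eq x]
    exact mul_nonpos_of_nonpos_of_nonneg h (Real.exp_pos _).le
  · refine .inr (strictMono_of_deriv_pos fun x => ?_)
    rw [hd.deriv_eq x]
    exact mul_pos h (Real.exp_pos _)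

theorem monotone_or_strictAnti (hd : Harmonic β d) : Monotone d ∨ StrictAnti d := by
  rcases le_or_gt 0 (deriv d 0) with h | h
  · refine .inl (monotone_of_deriv_nonneg hd.1 fun x => ?_)
    rw [hd.deriv_eq x]
    exact mul_nonneg h (Real.exp_pos _).le
  · refine .inr (strictAnti_of_deriv_neg fun x => ?_)
    rw [hd.deriv_eq x]
    exact mul_neg_of_neg_of_pos h (Real.exp_pos _)

theorem antitone_of_le {u v : ℝ} (hd : Harmonic β d) (huv : u < v) (h : d v ≤ d u) :
    Antitone d :=
  hd.antitone_or_strictMono.resolve_right fun hmono => (hmono huv).not_ge h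

theorem monotone_of_le {u v : ℝ} (hd : Harmonic β d) (huv : u < v) (h : d u ≤ d v) :
    Monotone d :=
  hd.monotone_or_strictAnti.resolve_right fun hanti => (hanti huv).not_ge h

end Harmonic

theorem harmonic_zero_id : Harmonic 0 id := by
  refine ⟨differentiable_id, ?_, fun x => ?_⟩ <;> simp

theorem harmonic_exp_mul (β : ℝ) : Harmonic β (fun t => Real.exp (-(2 * β) * t)) := by
  have hderiv : ∀ c : ℝ, deriv (fun t => c * Real.exp (-(2 * β) * t))
      = fun t => c * (-(2 * β)) * Real.exp (-(2 * β) * t) := by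
    intro c; funext t
    rw [(((hasDerivAt_id' t).const_mul (-(2 * β))).exp.const_mul c).deriv]
    ring
  have hderiv₁ := hderiv 1
  simp only [one_mul] at hderiv₁
  refine ⟨by fun_prop, hderiv₁ ▸ by fun_prop, fun x => ?_⟩
  rw [hderiv₁, hderiv]
  ring

theorem exists_harmonic_injective (β : ℝ) : ∃ φ : ℝ → ℝ, Harmonic β φ ∧ φ.Injective := by
  rcases eq_or_ne β 0 with rfl | hβ
  · exact ⟨id, harmonic_zero_id, Function.injective_id⟩
  · refine ⟨_, harmonic_exp_mul β, fun s t hst => ?_⟩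
    exact mul_left_cancel₀ (by simpa using hβ) (Real.exp_injective hst)

theorem exists_harmonic_eq_eq (β : ℝ) {u v : ℝ} (huv : u ≠ v) (p q : ℝ) :
    ∃ h : ℝ → ℝ, Harmonic β h ∧ h u = p ∧ h v = q := by
  obtain ⟨φ, hφ, hinj⟩ := exists_harmonic_injective β
  have hne : φ v - φ u ≠ 0 := sub_ne_zero.mpr (hinj.ne huv.symm)
  set B := (q - p) / (φ v - φ u)
  refine ⟨fun t => (p - B * φ u) + B * φ t, hφ.const_add_const_mul _ _, by ring, ?_⟩
  linear_combination div_mul_cancel₀ (q - p) hne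

theorem SubharmonicOn.mono {β : ℝ} {f : ℝ → ℝ} {s t : Set ℝ} (hf : SubharmonicOn β f t)
    (hst : s ⊆ t) : SubharmonicOn β f s :=
  fun u v huv hs => hf u v huv (hs.trans hst)

section Extrapolation

variable {β : ℝ} {f g : ℝ → ℝ} {u v x : ℝ}

theorem SubharmonicOn.harmonic_le_of_lt_left (hf : SubharmonicOn β f (Iic v))
    (hg : Harmonic β g) (huv : u < v) (hu : g u = f u) (hv : g v = f v) (hx : x < u) :
    g x ≤ f x := by
  obtain ⟨h, hh, hhx, hhv⟩ := exists_harmonic_eq_eq β (hx.trans huv).ne (f x) (f v)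
  have hfu : f u ≤ h u :=
    hf x v (hx.trans huv) Icc_subset_Iic_self h hh hhx.ge hhv.ge u ⟨hx.le, huv.le⟩
  have hanti : Antitone fun t => h t - g t :=
    (hh.sub hg).antitone_of_le huv (by linarith)
  linarith [hanti hx.le]

theorem SubharmonicOn.harmonic_le_of_lt_right (hf : SubharmonicOn β f (Ici u))
    (hg : Harmonic β g) (huv : u < v) (hu : g u = f u) (hv : g v = f v) (hx : v < x) :
    g x ≤ f x := by
  obtain ⟨h, hh, hhu, hhx⟩ := exists_harmonic_eq_eq β (huv.trans hx).ne (f u) (f x)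
  have hfv : f v ≤ h v :=
    hf u x (huv.trans hx) Icc_subset_Ici_self h hh hhu.ge hhx.ge v ⟨huv.le, hx.le⟩
  have hmono : Monotone fun t => h t - g t :=
    (hh.sub hg).monotone_of_le huv (by linarith)
  linarith [hmono hx.le]

end Extrapolation

/-- With `a₀ < ⋯ < a_m` and `f : ℝ → ℝ` subharmonic on all of `ℝ`, the
piecewise harmonic interpolation `I(f)` (extended outside `[a₀,a_m]` by the extreme
harmonic pieces `f₀` and `f_{m−1}`) satisfies `I(f) ≤ f` on `(−∞, a₀)` and on
`(a_m, +∞)`. -/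
theorem stmt7 (β : ℝ) (m : ℕ) (hm : 0 < m) (a : Fin (m + 1) → ℝ)
    (ha : StrictMono a) (f If : ℝ → ℝ) (fs : Fin m → ℝ → ℝ)
    (hsub : SubharmonicOn β f Set.univ)
    (hfs_harm : ∀ i, Harmonic β (fs i))
    (hfs_interp : ∀ i : Fin m,
      fs i (a i.castSucc) = f (a i.castSucc) ∧ fs i (a i.succ) = f (a i.succ))
    (hleft : ∀ x < a 0, If x = fs ⟨0, hm⟩ x)
    (hright : ∀ x > a (Fin.last m), If x = fs ⟨m - 1, by omega⟩ x) :
    (∀ x < a 0, If x ≤ f x) ∧ (∀ x > a (Fin.last m), If x ≤ f x) := by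
  set first : Fin m := ⟨0, hm⟩
  set last : Fin m := ⟨m - 1, by omega⟩
  have hfirst : first.castSucc = 0 := rfl
  have hlast : last.succ = Fin.last m := Fin.ext (by simp [last]; omega)
  refine ⟨fun x hx => ?_, fun x hx => ?_⟩
  · rw [hleft x hx]
    exact (hsub.mono (subset_univ _)).harmonic_le_of_lt_left (hfs_harm first)
      (ha first.castSucc_lt_succ) (hfs_interp first).1 (hfs_interp first).2 (hfirst ▸ hx)
  · rw [hright x hx]
    exact (hsub.mono (subset_univ _)).harmonic_le_of_lt_right (hfs_harm last)
      (ha last.castSucc_lt_succ) (hfs_interp last).1 (hfs_interp last).2 (hlast ▸ hx)
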